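/- Let G be a connected P5-free chordal bipartite graph with bipartition (A,B), |A| = |B| + 1, maximum biclique (A1,B1), and NNO orderings A2 = (u_1,...,u_p), B2 = (v_1,...,v_q). If deg(u_g) ≥ g for all 1 ≤ g ≤ p and deg(v_h) > h for all 1 ≤ h ≤ q, then G has a Hamiltonian path. -/

import Mathlib

open SimpleGraph Finset

variable {V : Type*}

/-- `(A, B)` is a bipartition of the graph `G`. -/
def IsBipartitionOf (G : SimpleGraph V) (A B : Finset V) : Prop :=
  Disjoint A B ∧ (∀ v : V, v ∈ A ∨ v ∈ B) ∧
    ∀ ⦃x y : V⦄, G.Adj x y → (x ∈ A ∧ y ∈ B) ∨ (x ∈ B ∧ y ∈ A)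

/-- `G` has no induced path on `n` vertices. -/
def PFree (n : ℕ) (G : SimpleGraph V) : Prop :=
  ∀ f : Fin n → V, Function.Injective f →
    ¬ (∀ i j : Fin n, G.Adj (f i) (f j) ↔ ((i : ℕ) + 1 = (j : ℕ) ∨ (j : ℕ) + 1 = (i : ℕ)))

/-- Every cycle of length at least 6 has a chord. -/
def ChordalBipartite (G : SimpleGraph V) : Prop :=
  ∀ (v : V) (c : G.Walk v v), c.IsCycle → 6 ≤ c.length →
    ∃ x y : V, x ∈ c.support ∧ y ∈ c.support ∧ G.Adj x y ∧ s(x, y) ∉ c.edges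

/-- `(A1, B1)` is a maximal biclique of `G` within the bipartition `(A, B)`:
it is a complete bipartite subgraph and no vertex can be added to either side. -/
def IsMaximalBiclique (G : SimpleGraph V) (A B A1 B1 : Finset V) : Prop :=
  A1 ⊆ A ∧ B1 ⊆ B ∧ (∀ x ∈ A1, ∀ y ∈ B1, G.Adj x y) ∧
    (∀ x ∈ A, (∀ y ∈ B1, G.Adj x y) → x ∈ A1) ∧
    (∀ y ∈ B, (∀ x ∈ A1, G.Adj x y) → y ∈ B1)

/-!
Write `A2 = A \ A1` and `B2 = B \ B1`. If some `x ∈ A2` were adjacent to some `y ∈ B2`, then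
maximality of the biclique and `P₅`-freeness would leave `x` without neighbours in `B1` and `y`
without neighbours in `A1`; the endpoints of such edges then form a union of components avoiding
`A1`, against connectivity. Hence `N(u) ⊆ B1` for `u ∈ A2` and `N(v) ⊆ A1` for `v ∈ B2`, and two
such neighbourhoods are comparable, since otherwise they close an induced `P₅` through the
biclique; with the degree ordering this makes them nested. The degree bounds are then Hall's
condition for distinct `b_g ∈ N(u_g)` and for distinct `a_0, …, a_q` with `a_0 ∈ N(v_0)` and
`a_h ∈ N(v_{h-1})`. The path `u_0 b_0 ⋯ u_{p-1} b_{p-1}`, followed by the unused vertices of `A1`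
and `B1` alternately, followed by `a_q v_{q-1} a_{q-1} ⋯ v_0 a_0`, is Hamiltonian; its middle part
is balanced because `|A| = |B| + 1`.
-/

theorem Finset.card_eq_of_enumeration {α : Type*} {s : Finset α} {n : ℕ} {f : Fin n → α}
    (hf : Function.Injective f) (hfs : ∀ i, f i ∈ s) (hs : ∀ x ∈ s, ∃ i, f i = x) : #s = n := by
  simpa using (Finset.card_nbij (s := Finset.univ) f (fun i _ => hfs i) hf.injOn
    fun x hx => by simpa using hs x hx).symm

theorem Finset.card_sdiff_image_add {α : Type*} [DecidableEq α] {S : Finset α} {n : ℕ}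
    {f : Fin n → α} (hf : Function.Injective f) (hfS : ∀ i, f i ∈ S) :
    #(S \ Finset.univ.image f) + n = #S := by
  have := Finset.card_sdiff_add_card_eq_card
    (Finset.image_subset_iff.mpr fun i (_ : i ∈ Finset.univ) => hfS i)
  rwa [Finset.card_image_of_injective _ hf, Finset.card_univ, Fintype.card_fin] at this

theorem Finset.exists_injective_mem_of_le_card {α : Type*} [DecidableEq α] {n : ℕ}
    (C : Fin n → Finset α) (hC : ∀ i : Fin n, (i : ℕ) + 1 ≤ #(C i)) :
    ∃ f : Fin n → α, Function.Injective f ∧ ∀ i, f i ∈ C i := by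
  refine (Finset.all_card_le_biUnion_card_iff_exists_injective C).mp fun s => ?_
  rcases s.eq_empty_or_nonempty with rfl | hs
  · simp
  calc #s ≤ #(Finset.Iic (s.max' hs)) := Finset.card_le_card fun i hi => by
        simpa using s.le_max' i hi
    _ = s.max' hs + 1 := Fin.card_Iic _
    _ ≤ #(C (s.max' hs)) := hC _
    _ ≤ #(s.biUnion C) := Finset.card_le_card (Finset.subset_biUnion_of_mem C (s.max'_mem hs))

theorem Finset.exists_injective_consecutive_mem {α : Type*} [DecidableEq α] {S : Finset α}
    (hS : S.Nonempty) {n : ℕ} (C : Fin n → Finset α) (hCS : ∀ i, C i ⊆ S) (hC : Monotone C)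
    (hcard : ∀ i : Fin n, (i : ℕ) + 1 < #(C i)) :
    ∃ f : Fin (n + 1) → α, Function.Injective f ∧ (∀ i, f i ∈ S) ∧
      ∀ i : Fin n, f i.castSucc ∈ C i ∧ f i.succ ∈ C i := by
  cases n with
  | zero =>
    obtain ⟨x, hx⟩ := hS
    exact ⟨fun _ => x, fun i j _ => Subsingleton.elim (α := Fin 1) i j, fun _ => hx,
      fun i => i.elim0⟩
  | succ n =>
    -- `f (i + 1)` is chosen from `C i`, and `f i` from `C (i - 1) ⊆ C i`
    obtain ⟨f, hf, hfC⟩ := Finset.exists_injective_mem_of_le_card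
      (fun i : Fin (n + 2) => C ⟨i - 1, by omega⟩) fun i => by
        have := hcard ⟨i - 1, by omega⟩
        dsimp only at this ⊢
        omega
    refine ⟨f, hf, fun i => hCS _ (hfC i), fun i => ⟨hC ?_ (hfC i.castSucc), ?_⟩⟩
    · simp [Fin.le_def]
    · simpa using hfC i.succ

namespace List

variable {α : Type*} {R : α → α → Prop}

theorem getLast?_interleave : ∀ {l₁ l₂ : List α}, l₁.length = l₂.length →
    (l₁.interleave l₂).getLast? = l₂.getLast?
  | [], [], _ => by simp
  | _ :: l₁, b :: l₂, h => by
    simp [getLast?_cons, getLast?_interleave (l₁ := l₁) (l₂ := l₂) (by simpa using h)]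

theorem isChain_interleave : ∀ {l₁ l₂ : List α} (_ : l₂.length ≤ l₁.length)
    (_ : l₁.length ≤ l₂.length + 1), (∀ i (hi : i < l₂.length), R l₁[i] l₂[i]) →
    (∀ i (hi : i + 1 < l₁.length), R l₂[i] l₁[i + 1]) → (l₁.interleave l₂).IsChain R
  | [], [], _, _, _, _ => by simp
  | [_], [], _, _, _, _ => by simp
  | a :: l₁, b :: l₂, h₁, h₂, hR₁, hR₂ => by
    rw [cons_interleave, cons_interleave]
    refine .cons_cons (hR₁ 0 (by simp)) (isChain_cons.mpr ⟨fun x hx => ?_, ?_⟩)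
    · cases l₁ with
      | nil =>
        obtain rfl : l₂ = [] := by simpa using h₁
        simp at hx
      | cons a' l₁ =>
        obtain rfl : a' = x := by simpa using hx
        simpa using hR₂ 0 (by simp)
    · exact isChain_interleave (by simpa using h₁) (by simpa using h₂)
        (fun i hi => hR₁ (i + 1) (by simpa using hi)) (fun i hi => hR₂ (i + 1) (by simpa using hi))

theorem isChain_interleave_append {X₁ Y₁ X₂ Y₂ : List α} (h₁ : X₁.length = Y₁.length)
    (h₂ : Y₂.length ≤ X₂.length) (hc₁ : (X₁.interleave Y₁).IsChain R)
    (hc₂ : (X₂.interleave Y₂).IsChain R) (hR : ∀ y ∈ Y₁.getLast?, ∀ x ∈ X₂.head?, R y x) :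
    ((X₁ ++ X₂).interleave (Y₁ ++ Y₂)).IsChain R := by
  rw [interleave_append_append_of_length_eq_length h₁]
  refine isChain_append.mpr ⟨hc₁, hc₂, fun y hy x hx => hR y ?_ x ?_⟩
  · rwa [getLast?_interleave h₁] at hy
  · cases X₂ with
    | nil => simp_all
    | cons => simpa using hx

theorem isChain_interleave_of_forall {X Y : List α} (h₁ : Y.length ≤ X.length)
    (h₂ : X.length ≤ Y.length + 1) (hR : ∀ x ∈ X, ∀ y ∈ Y, R x y ∧ R y x) :
    (X.interleave Y).IsChain R :=
  isChain_interleave h₁ h₂ (fun _ _ => (hR _ (getElem_mem _) _ (getElem_mem _)).1)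
    fun _ _ => (hR _ (getElem_mem _) _ (getElem_mem _)).2

theorem isChain_interleave_append_append_reverse {U Y₁ X Y₂ Z W : List α}
    (hU : U.length = Y₁.length) (hX : X.length = Y₂.length) (hZ : Z.length = W.length + 1)
    (hUY : (U.interleave Y₁).IsChain R) (hZW : (Z.interleave W).IsChain fun x y => R y x)
    (hR : ∀ x ∈ X ++ Z, ∀ y ∈ Y₁ ++ Y₂, R x y ∧ R y x) :
    ((U ++ (X ++ Z.reverse)).interleave (Y₁ ++ (Y₂ ++ W.reverse))).IsChain R := by
  refine isChain_interleave_append hU (by simp; omega) hUY ?_ fun y hy x hx =>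
    (hR x ?_ y (mem_append_left _ (mem_of_getLast? hy))).2
  · refine isChain_interleave_append hX (by simp [hZ]) ?_ ?_ fun y hy x hx =>
      (hR x (mem_append_right _ ?_) y (mem_append_right _ (mem_of_getLast? hy))).2
    · exact isChain_interleave_of_forall (by omega) (by omega) fun x hx y hy =>
        hR x (mem_append_left _ hx) y (mem_append_right _ hy)
    · rwa [← reverse_interleave_of_length_eq_length_add_one hZ, isChain_reverse]
    · simpa using mem_of_mem_head? hx
  · simpa [or_comm] using mem_of_mem_head? hx

end List

theorem SimpleGraph.exists_isHamiltonian_of_isChain [Fintype V] [DecidableEq V]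
    {G : SimpleGraph V} {l : List V} (hne : l ≠ []) (hl : l.IsChain G.Adj) (hmem : ∀ x, x ∈ l)
    (hlen : l.length ≤ Fintype.card V) : ∃ (a b : V) (w : G.Walk a b), w.IsHamiltonian := by
  have hnd : l.Nodup := by
    rw [← Multiset.coe_nodup, ← Multiset.toFinset_card_eq_card_iff_nodup]
    refine le_antisymm (Multiset.toFinset_card_le _) ?_
    rwa [Multiset.coe_card, List.toFinset_coe,
      Finset.eq_univ_of_forall fun x => List.mem_toFinset.mpr (hmem x)]
  exact ⟨_, _, Walk.ofSupport l hne hl, fun x => by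
    rw [Walk.support_ofSupport]; exact List.count_eq_one_of_mem hnd (hmem x)⟩

namespace IsBipartitionOf

variable {G : SimpleGraph V} {A B : Finset V}

theorem symm (h : IsBipartitionOf G A B) : IsBipartitionOf G B A :=
  ⟨h.1.symm, fun v => (h.2.1 v).symm, fun _ _ hxy => (h.2.2 hxy).symm⟩

theorem notMem_right (h : IsBipartitionOf G A B) {x : V} (hx : x ∈ A) : x ∉ B :=
  Finset.disjoint_left.mp h.1 hx

theorem mem_right_of_adj (h : IsBipartitionOf G A B) {x y : V} (hx : x ∈ A) (hxy : G.Adj x y) :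
    y ∈ B :=
  (h.2.2 hxy).elim And.right fun h' => absurd h'.1 (h.notMem_right hx)

theorem not_adj_of_mem_left (h : IsBipartitionOf G A B) {x y : V} (hx : x ∈ A) (hy : y ∈ A) :
    ¬ G.Adj x y :=
  fun hxy => h.notMem_right hy (h.mem_right_of_adj hx hxy)

theorem neighborFinset_subset [Fintype V] [DecidableRel G.Adj] (h : IsBipartitionOf G A B)
    {x : V} (hx : x ∈ A) : G.neighborFinset x ⊆ B :=
  fun _ hy => h.mem_right_of_adj hx ((G.mem_neighborFinset _ _).mp hy)

theorem card_add_card [Fintype V] [DecidableEq V] (h : IsBipartitionOf G A B) :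
    #A + #B = Fintype.card V := by
  rw [← Finset.card_union_of_disjoint h.1, ← Finset.card_univ]
  congr
  exact Finset.eq_univ_of_forall fun v => Finset.mem_union.mpr (h.2.1 v)

theorem le_card_of_le_degree [Fintype V] [DecidableRel G.Adj] (h : IsBipartitionOf G A B)
    {n : ℕ} {f : Fin n → V} (hf : ∀ i, f i ∈ A)
    (hdeg : ∀ i : Fin n, (i : ℕ) + 1 ≤ G.degree (f i)) : n ≤ #B := by
  cases n with
  | zero => simp
  | succ n =>
    have := hdeg (Fin.last n)
    rw [← card_neighborFinset_eq_degree] at this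
    simpa using this.trans (Finset.card_le_card (h.neighborFinset_subset (hf _)))

end IsBipartitionOf

theorem PFree.false_of_induced_path {G : SimpleGraph V} (hG : PFree 5 G) {x₀ x₁ x₂ x₃ x₄ : V}
    (h₀₁ : G.Adj x₀ x₁) (h₁₂ : G.Adj x₁ x₂) (h₂₃ : G.Adj x₂ x₃) (h₃₄ : G.Adj x₃ x₄)
    (h₀₂ : ¬ G.Adj x₀ x₂) (h₀₃ : ¬ G.Adj x₀ x₃) (h₀₄ : ¬ G.Adj x₀ x₄)
    (h₁₃ : ¬ G.Adj x₁ x₃) (h₁₄ : ¬ G.Adj x₁ x₄) (h₂₄ : ¬ G.Adj x₂ x₄) : False := by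
  set f : Fin 5 → V := ![x₀, x₁, x₂, x₃, x₄]
  have hf : ∀ i j, G.Adj (f i) (f j) ↔ ((i : ℕ) + 1 = j ∨ (j : ℕ) + 1 = i) := by
    intro i j
    fin_cases i <;> fin_cases j <;>
      simp [f, h₀₁, h₁₂, h₂₃, h₃₄, h₀₁.symm, h₁₂.symm, h₂₃.symm, h₃₄.symm, h₀₂, h₀₃, h₀₄, h₁₃,
        h₁₄, h₂₄, mt G.adj_symm h₀₂, mt G.adj_symm h₀₃, mt G.adj_symm h₀₄, mt G.adj_symm h₁₃,
        mt G.adj_symm h₁₄, mt G.adj_symm h₂₄]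
  -- the rows of the adjacency matrix of `P₅` are pairwise distinct
  have hrows : ∀ i j : Fin 5,
      (∀ k : Fin 5, ((i : ℕ) + 1 = k ∨ (k : ℕ) + 1 = i) ↔ ((j : ℕ) + 1 = k ∨ (k : ℕ) + 1 = j)) →
        i = j := by decide
  exact hG f (fun i j hij => hrows i j fun k => (hf i k).symm.trans (hij ▸ hf j k)) hf

/-- In a bipartite graph, `x₀x₃` and `x₁x₄` are the only possible chords of a path `x₀ ⋯ x₄`. -/
theorem PFree.adj_or_adj_of_path {G : SimpleGraph V} {A B : Finset V} (hG : PFree 5 G)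
    (hbip : IsBipartitionOf G A B) {x₀ x₁ x₂ x₃ x₄ : V}
    (h₀₁ : G.Adj x₀ x₁) (h₁₂ : G.Adj x₁ x₂) (h₂₃ : G.Adj x₂ x₃) (h₃₄ : G.Adj x₃ x₄) :
    G.Adj x₀ x₃ ∨ G.Adj x₁ x₄ := by
  wlog hx₀ : x₀ ∈ A generalizing A B
  · exact this hbip.symm ((hbip.2.1 x₀).resolve_left hx₀)
  by_contra! h
  have hx₁ := hbip.mem_right_of_adj hx₀ h₀₁
  have hx₂ := hbip.symm.mem_right_of_adj hx₁ h₁₂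
  have hx₃ := hbip.mem_right_of_adj hx₂ h₂₃
  have hx₄ := hbip.symm.mem_right_of_adj hx₃ h₃₄
  exact hG.false_of_induced_path h₀₁ h₁₂ h₂₃ h₃₄ (hbip.not_adj_of_mem_left hx₀ hx₂) h.1
    (hbip.not_adj_of_mem_left hx₀ hx₄) (hbip.symm.not_adj_of_mem_left hx₁ hx₃) h.2
    (hbip.not_adj_of_mem_left hx₂ hx₄)

namespace IsMaximalBiclique

variable {G : SimpleGraph V} {A B A1 B1 : Finset V}

theorem symm (h : IsMaximalBiclique G A B A1 B1) : IsMaximalBiclique G B A B1 A1 :=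
  ⟨h.2.1, h.1, fun x hx y hy => (h.2.2.1 y hy x hx).symm, fun y hy hy' => h.2.2.2.2 y hy
    fun x hx => (hy' x hx).symm, fun x hx hx' => h.2.2.2.1 x hx fun y hy => (hx' y hy).symm⟩

theorem adj (h : IsMaximalBiclique G A B A1 B1) {x y : V} (hx : x ∈ A1) (hy : y ∈ B1) :
    G.Adj x y :=
  h.2.2.1 x hx y hy

theorem neighborFinset_subset_or_subset [Fintype V] [DecidableRel G.Adj]
    (h : IsMaximalBiclique G A B A1 B1) (hbip : IsBipartitionOf G A B) (hG : PFree 5 G)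
    {a x x' : V} (ha : a ∈ A1) (hx : G.neighborFinset x ⊆ B1) (hx' : G.neighborFinset x' ⊆ B1) :
    G.neighborFinset x ⊆ G.neighborFinset x' ∨ G.neighborFinset x' ⊆ G.neighborFinset x := by
  by_contra! hcon
  obtain ⟨b, hb, hb'⟩ := Finset.not_subset.mp hcon.1
  obtain ⟨c, hc, hc'⟩ := Finset.not_subset.mp hcon.2
  have hab := h.adj ha (hx hb)
  have hac := h.adj ha (hx' hc)
  rw [mem_neighborFinset] at hb hb' hc hc'
  exact (hG.adj_or_adj_of_path hbip hb hab.symm hac hc.symm).elim hc' fun hbx => hb' hbx.symm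

theorem monotone_neighborFinset [Fintype V] [DecidableRel G.Adj] {ι : Type*} [Preorder ι]
    (h : IsMaximalBiclique G A B A1 B1) (hbip : IsBipartitionOf G A B) (hG : PFree 5 G)
    (hA1 : A1.Nonempty) {f : ι → V} (hf : ∀ i, G.neighborFinset (f i) ⊆ B1)
    (hdeg : Monotone fun i => G.degree (f i)) : Monotone fun i => G.neighborFinset (f i) := by
  intro i j hij
  obtain ⟨a, ha⟩ := hA1
  refine (h.neighborFinset_subset_or_subset hbip hG ha (hf i) (hf j)).elim id fun hji => ?_
  refine (Finset.eq_of_subset_of_card_le hji ?_).symm.subset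
  simpa only [card_neighborFinset_eq_degree] using hdeg hij

variable [DecidableEq V]

theorem exists_not_adj (h : IsMaximalBiclique G A B A1 B1) {x : V} (hx : x ∈ A \ A1) :
    ∃ y ∈ B1, ¬ G.Adj x y := by
  by_contra! hcon
  exact (Finset.mem_sdiff.mp hx).2 (h.2.2.2.1 x (Finset.mem_sdiff.mp hx).1 hcon)

theorem degree_lt_card [Fintype V] [DecidableRel G.Adj] (h : IsMaximalBiclique G A B A1 B1)
    (hbip : IsBipartitionOf G A B) {x : V} (hx : x ∈ A \ A1) : G.degree x < #B := by
  obtain ⟨y, hy, hxy⟩ := h.exists_not_adj hx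
  rw [← card_neighborFinset_eq_degree]
  refine Finset.card_lt_card ⟨hbip.neighborFinset_subset (Finset.mem_sdiff.mp hx).1, fun hB => ?_⟩
  exact hxy ((G.mem_neighborFinset _ _).mp (hB (h.2.1 hy)))

theorem nonempty_of_card_sdiff_lt_degree [Fintype V] [DecidableRel G.Adj]
    (h : IsMaximalBiclique G A B A1 B1) (hbip : IsBipartitionOf G A B) (hcard : #B ≤ #A + 1)
    {x : V} (hx : x ∈ A \ A1) (hdeg : #(A \ A1) < G.degree x) : A1.Nonempty := by
  have := h.degree_lt_card hbip hx
  have := Finset.card_sdiff_add_card_eq_card h.1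
  exact Finset.card_pos.mp (by omega)

theorem not_adj_of_adj_sdiff (h : IsMaximalBiclique G A B A1 B1) (hbip : IsBipartitionOf G A B)
    (hG : PFree 5 G) {x y b : V} (hx : x ∈ A \ A1) (hy : y ∈ B \ B1) (hxy : G.Adj x y)
    (hb : b ∈ B1) : ¬ G.Adj x b := by
  intro hxb
  obtain ⟨a, ha, hya⟩ := h.symm.exists_not_adj hy
  obtain ⟨c, hc, hxc⟩ := h.exists_not_adj hx
  exact (hG.adj_or_adj_of_path hbip hxy.symm hxb (h.adj ha hb).symm (h.adj ha hc)).elim hya hxc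

theorem mem_sdiff_of_adj (h : IsMaximalBiclique G A B A1 B1) (hbip : IsBipartitionOf G A B)
    (hG : PFree 5 G) {x y z : V} (hx : x ∈ A \ A1) (hy : y ∈ B \ B1) (hxy : G.Adj x y)
    (hxz : G.Adj x z) : z ∈ B \ B1 :=
  Finset.mem_sdiff.mpr ⟨hbip.mem_right_of_adj (Finset.mem_sdiff.mp hx).1 hxz,
    fun hz => h.not_adj_of_adj_sdiff hbip hG hx hy hxy hz hxz⟩

theorem not_adj_sdiff (h : IsMaximalBiclique G A B A1 B1) (hbip : IsBipartitionOf G A B)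
    (hG : PFree 5 G) (hconn : G.Connected) (hA1 : A1.Nonempty) {x y : V} (hx : x ∈ A \ A1)
    (hy : y ∈ B \ B1) : ¬ G.Adj x y := by
  intro hxy
  -- the endpoints of edges between `A \ A1` and `B \ B1` form a union of components, missing `A1`
  let S : V → Prop := fun z => (z ∈ A \ A1 ∧ ∃ w ∈ B \ B1, G.Adj z w) ∨
    (z ∈ B \ B1 ∧ ∃ w ∈ A \ A1, G.Adj z w)
  have hS : ∀ {z z'}, G.Adj z z' → S z → S z' := by
    rintro z z' hzz' (⟨hz, w, hw, hzw⟩ | ⟨hz, w, hw, hzw⟩)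
    · exact .inr ⟨h.mem_sdiff_of_adj hbip hG hz hw hzw hzz', z, hz, hzz'.symm⟩
    · exact .inl ⟨h.symm.mem_sdiff_of_adj hbip.symm hG hz hw hzw hzz', z, hz, hzz'.symm⟩
  obtain ⟨a, ha⟩ := hA1
  have hSa : ¬ S a := by
    rintro (⟨ha', -⟩ | ⟨ha', -⟩)
    · exact (Finset.mem_sdiff.mp ha').2 ha
    · exact hbip.notMem_right (h.1 ha) (Finset.mem_sdiff.mp ha').1
  obtain ⟨w⟩ := hconn.preconnected x a
  obtain ⟨d, -, hd, hd'⟩ := w.exists_boundary_dart {z | S z} (.inl ⟨hx, y, hy, hxy⟩) hSa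
  exact hd' (hS d.adj hd)

theorem neighborFinset_subset [Fintype V] [DecidableRel G.Adj]
    (h : IsMaximalBiclique G A B A1 B1) (hbip : IsBipartitionOf G A B) (hG : PFree 5 G)
    (hconn : G.Connected) (hA1 : A1.Nonempty) {x : V} (hx : x ∈ A \ A1) :
    G.neighborFinset x ⊆ B1 := by
  intro y hy
  rw [mem_neighborFinset] at hy
  by_contra hyB1
  exact h.not_adj_sdiff hbip hG hconn hA1 hx
    (Finset.mem_sdiff.mpr ⟨hbip.mem_right_of_adj (Finset.mem_sdiff.mp hx).1 hy, hyB1⟩) hy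

theorem neighborFinset_subset_left [Fintype V] [DecidableRel G.Adj]
    (h : IsMaximalBiclique G A B A1 B1) (hbip : IsBipartitionOf G A B) (hG : PFree 5 G)
    (hconn : G.Connected) (hA1 : A1.Nonempty) {y : V} (hy : y ∈ B \ B1) :
    G.neighborFinset y ⊆ A1 := by
  intro x hx
  rw [mem_neighborFinset] at hx
  by_contra hxA1
  exact h.not_adj_sdiff hbip hG hconn hA1
    (Finset.mem_sdiff.mpr ⟨hbip.symm.mem_right_of_adj (Finset.mem_sdiff.mp hy).1 hx, hxA1⟩) hy
    hx.symm

end IsMaximalBiclique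

open List in
theorem IsMaximalBiclique.exists_isHamiltonian_of_zigzag [Fintype V] [DecidableEq V]
    {G : SimpleGraph V} {A B A1 B1 : Finset V} {p q : ℕ} (h : IsMaximalBiclique G A B A1 B1)
    (hbip : IsBipartitionOf G A B) (hcard : #A = #B + 1)
    {u b : Fin p → V} {a : Fin (q + 1) → V} {v : Fin q → V}
    (hp : #(A \ A1) = p) (hu : ∀ x ∈ A \ A1, ∃ i, u i = x)
    (hq : #(B \ B1) = q) (hv : ∀ y ∈ B \ B1, ∃ j, v j = y)
    (hb : Function.Injective b) (hbB1 : ∀ i, b i ∈ B1) (hub : ∀ i j, i ≤ j → G.Adj (u j) (b i))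
    (ha : Function.Injective a) (haA1 : ∀ i, a i ∈ A1)
    (hva : ∀ j, G.Adj (v j) (a j.castSucc) ∧ G.Adj (v j) (a j.succ)) :
    ∃ (x y : V) (w : G.Walk x y), w.IsHamiltonian := by
  set RA := (A1 \ Finset.univ.image a).toList
  set RB := (B1 \ Finset.univ.image b).toList
  have hRA : RA.length + (q + 1) = #A1 := by
    rw [Finset.length_toList, Finset.card_sdiff_image_add ha haA1]
  have hRB : RB.length + p = #B1 := by
    rw [Finset.length_toList, Finset.card_sdiff_image_add hb hbB1]
  have hA : p + #A1 = #A := hp ▸ Finset.card_sdiff_add_card_eq_card h.1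
  have hB : q + #B1 = #B := hq ▸ Finset.card_sdiff_add_card_eq_card h.2.1
  have hbic : ∀ x ∈ RA ++ ofFn a, ∀ y ∈ ofFn b ++ RB, G.Adj x y ∧ G.Adj y x := by
    simp only [RA, RB, mem_append, Finset.mem_toList, Finset.mem_sdiff, mem_ofFn]
    rintro x hx y hy
    have hxy := h.adj (hx.elim And.left fun ⟨i, hi⟩ => hi ▸ haA1 i)
      (hy.elim (fun ⟨i, hi⟩ => hi ▸ hbB1 i) And.left)
    exact ⟨hxy, hxy.symm⟩
  refine exists_isHamiltonian_of_isChain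
    (l := (ofFn u ++ (RA ++ (ofFn a).reverse)).interleave (ofFn b ++ (RB ++ (ofFn v).reverse)))
    (by simp) ?_ ?_ ?_
  · refine isChain_interleave_append_append_reverse (by simp) (by omega) (by simp) ?_ ?_ hbic
    · refine isChain_interleave (by simp) (by simp) (fun i hi => ?_) fun i hi => ?_
      · simpa using hub ⟨i, by simpa using hi⟩ _ le_rfl
      · simp only [length_ofFn] at hi
        simpa using (hub ⟨i, by omega⟩ ⟨i + 1, hi⟩ (by simp [Fin.le_def])).symm
    · refine isChain_interleave (by simp) (by simp) (fun i hi => ?_) fun i hi => ?_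
      · simp only [List.getElem_ofFn]
        exact (hva ⟨i, by simpa using hi⟩).1
      · simp only [List.getElem_ofFn]
        exact (hva ⟨i, by simpa using hi⟩).2.symm
  · intro x
    rw [interleave_perm_append.mem_iff]
    simp only [RA, RB, mem_append, mem_reverse, mem_ofFn, Finset.mem_toList, Finset.mem_sdiff,
      Finset.mem_image, Finset.mem_univ, true_and]
    rcases hbip.2.1 x with hx | hx
    · by_cases hx1 : x ∈ A1
      · tauto
      · obtain ⟨i, rfl⟩ := hu x (Finset.mem_sdiff.mpr ⟨hx, hx1⟩)
        tauto
    · by_cases hx1 : x ∈ B1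
      · tauto
      · obtain ⟨i, rfl⟩ := hv x (Finset.mem_sdiff.mpr ⟨hx, hx1⟩)
        tauto
  · simp only [length_interleave, length_append, length_reverse, length_ofFn]
    linarith [hbip.card_add_card]

theorem stmt11_general [Fintype V] [DecidableEq V] (G : SimpleGraph V) [DecidableRel G.Adj]
    (A B A1 B1 : Finset V) {p q : ℕ} (u : Fin p → V) (v : Fin q → V)
    (hconn : G.Connected) (hbip : IsBipartitionOf G A B)
    (hp5 : PFree 5 G)
    (hmax : IsMaximalBiclique G A B A1 B1)
    -- `u` enumerates `A \ A1` in non-decreasing degree order (NNO)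
    (hu : Function.Injective u) (huA : ∀ i, u i ∈ A \ A1)
    (huAll : ∀ x ∈ A \ A1, ∃ i, u i = x)
    (humono : ∀ i j : Fin p, i ≤ j → G.degree (u i) ≤ G.degree (u j))
    -- `v` enumerates `B \ B1` in non-decreasing degree order (NNO)
    (hv : Function.Injective v) (hvB : ∀ j, v j ∈ B \ B1)
    (hvAll : ∀ y ∈ B \ B1, ∃ j, v j = y)
    (hvmono : ∀ i j : Fin q, i ≤ j → G.degree (v i) ≤ G.degree (v j))
    (hcard : A.card = B.card + 1)
    (hdu : ∀ g : Fin p, (g : ℕ) + 1 ≤ G.degree (u g))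
    (hdv : ∀ h : Fin q, (h : ℕ) + 1 < G.degree (v h)) :
    ∃ (a b : V) (w : G.Walk a b), w.IsHamiltonian := by
  have hp := Finset.card_eq_of_enumeration hu huA huAll
  have hq := Finset.card_eq_of_enumeration hv hvB hvAll
  have hA1 : A1.Nonempty := Finset.card_pos.mp <| by
    have := hbip.le_card_of_le_degree (fun i => (Finset.mem_sdiff.mp (huA i)).1) hdu
    have := Finset.card_sdiff_add_card_eq_card hmax.1
    omega
  have hB1 (j : Fin q) : B1.Nonempty := by
    have := j.isLt
    refine hmax.symm.nonempty_of_card_sdiff_lt_degree hbip.symm (by omega)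
      (hvB ⟨q - 1, by omega⟩) ?_
    simpa [hq, Nat.sub_add_cancel (by omega : 1 ≤ q)] using hdv ⟨q - 1, by omega⟩
  have hNu i := hmax.neighborFinset_subset hbip hp5 hconn hA1 (huA i)
  have hNv j := hmax.neighborFinset_subset_left hbip hp5 hconn hA1 (hvB j)
  have hNu_mono := hmax.monotone_neighborFinset hbip hp5 hA1 hNu humono
  have hNv_mono : Monotone fun j => G.neighborFinset (v j) := fun i j hij =>
    hmax.symm.monotone_neighborFinset hbip.symm hp5 (hB1 i) hNv hvmono hij
  obtain ⟨b, hb, hbN⟩ := Finset.exists_injective_mem_of_le_card (fun i => G.neighborFinset (u i))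
    fun i => by simpa using hdu i
  obtain ⟨a, ha, haA1, haN⟩ := Finset.exists_injective_consecutive_mem hA1
    (fun j => G.neighborFinset (v j)) hNv hNv_mono fun j => by simpa using hdv j
  exact hmax.exists_isHamiltonian_of_zigzag hbip hcard hp huAll hq hvAll hb (fun i => hNu i (hbN i))
    (fun i j hij => (G.mem_neighborFinset _ _).mp (hNu_mono hij (hbN i))) ha haA1
    fun j => ⟨(G.mem_neighborFinset _ _).mp (haN j).1, (G.mem_neighborFinset _ _).mp (haN j).2⟩

theorem stmt11 [Fintype V] [DecidableEq V] (G : SimpleGraph V) [DecidableRel G.Adj]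
    (A B A1 B1 : Finset V) {p q : ℕ} (u : Fin p → V) (v : Fin q → V)
    (hconn : G.Connected) (hbip : IsBipartitionOf G A B)
    (hcb : ChordalBipartite G) (hp5 : PFree 5 G)
    (hmax : IsMaximalBiclique G A B A1 B1)
    -- `u` enumerates `A \ A1` in non-decreasing degree order (NNO)
    (hu : Function.Injective u) (huA : ∀ i, u i ∈ A \ A1)
    (huAll : ∀ x ∈ A \ A1, ∃ i, u i = x)
    (humono : ∀ i j : Fin p, i ≤ j → G.degree (u i) ≤ G.degree (u j))
    -- `v` enumerates `B \ B1` in non-decreasing degree order (NNO)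
    (hv : Function.Injective v) (hvB : ∀ j, v j ∈ B \ B1)
    (hvAll : ∀ y ∈ B \ B1, ∃ j, v j = y)
    (hvmono : ∀ i j : Fin q, i ≤ j → G.degree (v i) ≤ G.degree (v j))
    (hcard : A.card = B.card + 1)
    (hdu : ∀ g : Fin p, (g : ℕ) + 1 ≤ G.degree (u g))
    (hdv : ∀ h : Fin q, (h : ℕ) + 1 < G.degree (v h)) :
    ∃ (a b : V) (w : G.Walk a b), w.IsHamiltonian :=
  stmt11_general G A B A1 B1 u v hconn hbip hp5 hmax hu huA huAll humono hv hvB hvAll hvmono hcard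
    hdu hdv
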